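/- The gluing relation of any expanding edge replacement system is rational: for every expanding edge replacement system R (satisfying the loop-color assumption) there exists a finite-state automaton over the alphabet Σ², with partial transition function, that recognizes an infinite sequence (x₀,y₀)(x₁,y₁)… if and only if x₀x₁… and y₀y₁… both belong to Ω_R and x₀x₁… ∼ y₀y₁…. -/

import Mathlib

/-!
Formalization of edge replacement systems, their limit-space gluing relation,
and the gluing automaton, following Belk–Forrest and the paper
"Rationality of the gluing of edge replacement systems".
-/

namespace ERSPaper

/-- The five adjacency-type symbols `in`, `out`, `lp`, `db⁺`, `db⁻`. -/
inductive EType : Type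
  | inn : EType
  | out : EType
  | lp : EType
  | dbp : EType
  | dbm : EType
  deriving DecidableEq

/-- An edge replacement system satisfying the loop-color assumption.
`V z` / `E z` are the vertices/edges of the base graph (`z = none`) or of the
replacement graph `Γ c` (`z = some c`).  For loop colors the two boundary
vertices coincide (the single boundary vertex `λ_c`); for non-loop colors they
are distinct.  The field `loop_iff` is the loop-color assumption: an edge is a
loop if and only if its color is a loop color. -/
structure ERS : Type 1 where
  Col : Type
  [colFintype : Fintype Col]
  [colDecEq : DecidableEq Col]
  V : Option Col → Type
  E : Option Col → Type
  [vFintype : ∀ z, Fintype (V z)]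
  [eFintype : ∀ z, Fintype (E z)]
  [vDecEq : ∀ z, DecidableEq (V z)]
  ini : ∀ z, E z → V z
  fin : ∀ z, E z → V z
  col : ∀ z, E z → Col
  loopCol : Col → Prop
  bIni : ∀ c : Col, V (some c)
  bFin : ∀ c : Col, V (some c)
  bd_eq_iff : ∀ c : Col, (bIni c = bFin c ↔ loopCol c)
  loop_iff : ∀ z (e : E z), (ini z e = fin z e ↔ loopCol (col z e))

attribute [instance] ERS.colFintype ERS.colDecEq ERS.vFintype ERS.eFintype ERS.vDecEq

namespace ERS

/-- The alphabet `Σ`: the disjoint union of the edge sets of the base graph and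
of all the replacement graphs. -/
def Alph (R : ERS) : Type := Σ z : Option R.Col, R.E z

/-- Membership in the symbol space `Ω_R`: infinite directed walks on the color
graph starting at `q(0)`, i.e. `x₀` is an edge of the base graph and `x_{l+1}`
is an edge of `Γ_{c(x_l)}`. -/
def IsWalk (R : ERS) (x : ℕ → R.Alph) : Prop :=
  (x 0).1 = none ∧ ∀ l : ℕ, (x (l + 1)).1 = some (R.col (x l).1 (x l).2)

/-- The finite word `x₀ … x_m` belongs to `E_R`. -/
def IsWalkUpTo (R : ERS) (x : ℕ → R.Alph) (m : ℕ) : Prop :=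
  (x 0).1 = none ∧ ∀ l : ℕ, l < m → (x (l + 1)).1 = some (R.col (x l).1 (x l).2)

theorem IsWalk.upTo {R : ERS} {x : ℕ → R.Alph} (hx : R.IsWalk x) (m : ℕ) :
    R.IsWalkUpTo x m :=
  ⟨hx.1, fun l _ => hx.2 l⟩

end ERS

/-- A finite graph whose edges are colored by the colors of `R`. -/
structure GraphData (R : ERS) : Type 1 where
  V : Type
  E : Type
  ι : E → V
  τ : E → V
  col : E → R.Col

/-- An edge is incident on a vertex. -/
def GraphData.IncidentOn {R : ERS} (G : GraphData R) (e : G.E) (v : G.V) : Prop :=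
  G.ι e = v ∨ G.τ e = v

/-- Two edges are incident on a common vertex. -/
def GraphData.Adjacent {R : ERS} (G : GraphData R) (e f : G.E) : Prop :=
  ∃ v : G.V, G.IncidentOn e v ∧ G.IncidentOn f v

namespace ERS

/-- When expanding the edge `e`, a vertex `v` of the replacement graph
`Γ_{c(e)}` is attached: boundary vertices go to the endpoints of `e`,
interior vertices give fresh vertices. -/
def attach (R : ERS) (G : GraphData R) (e : G.E) (v : R.V (some (G.col e))) :
    G.V ⊕ (Σ e : G.E,
      {v : R.V (some (G.col e)) // v ≠ R.bIni (G.col e) ∧ v ≠ R.bFin (G.col e)}) :=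
  if h1 : v = R.bIni (G.col e) then Sum.inl (G.ι e)
  else if h2 : v = R.bFin (G.col e) then Sum.inl (G.τ e)
  else Sum.inr ⟨e, v, h1, h2⟩

/-- The simultaneous expansion of every edge of `G`. -/
def expandG (R : ERS) (G : GraphData R) : GraphData R where
  V := G.V ⊕ (Σ e : G.E,
    {v : R.V (some (G.col e)) // v ≠ R.bIni (G.col e) ∧ v ≠ R.bFin (G.col e)})
  E := Σ e : G.E, R.E (some (G.col e))
  ι := fun p => R.attach G p.1 (R.ini (some (G.col p.1)) p.2)
  τ := fun p => R.attach G p.1 (R.fin (some (G.col p.1)) p.2)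
  col := fun p => R.col (some (G.col p.1)) p.2

/-- The base graph, as graph data. -/
def base (R : ERS) : GraphData R :=
  ⟨R.V none, R.E none, R.ini none, R.fin none, R.col none⟩

/-- The full expansion sequence `E_m`. -/
def fullExp (R : ERS) : ℕ → GraphData R
  | 0 => R.base
  | m + 1 => R.expandG (R.fullExp m)

theorem col_cast (R : ERS) (p : R.Alph) (z : Option R.Col) (h : p.1 = z) :
    R.col z (cast (congrArg R.E h) p.2) = R.col p.1 p.2 := by
  rcases p with ⟨w, e⟩
  cases h
  rfl

/-- The edge of the full expansion `E_m` labeled by the word `x₀ … x_m`,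
together with the fact that its color is the color of its last letter. -/
def wordEdge (R : ERS) (x : ℕ → R.Alph) :
    (m : ℕ) → R.IsWalkUpTo x m →
      {e : (R.fullExp m).E // (R.fullExp m).col e = R.col (x m).1 (x m).2}
  | 0, hx => ⟨cast (congrArg R.E hx.1) (x 0).2, R.col_cast (x 0) none hx.1⟩
  | m + 1, hx =>
    let prev := R.wordEdge x m ⟨hx.1, fun l hl => hx.2 l (Nat.lt_succ_of_lt hl)⟩
    let h : (x (m + 1)).1 = some ((R.fullExp m).col prev.1) :=
      (hx.2 m (Nat.lt_succ_self m)).trans (congrArg some prev.2.symm)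
    ⟨⟨prev.1, cast (congrArg R.E h) (x (m + 1)).2⟩, R.col_cast (x (m + 1)) _ h⟩

/-- The gluing relation: two elements of `Ω_R` are glued when, for every large
enough `n`, their length-`(n+1)` prefixes are incident on a common vertex of
the full expansion `E_n`. -/
def Glued (R : ERS) (x y : ℕ → R.Alph) (hx : R.IsWalk x) (hy : R.IsWalk y) : Prop :=
  ∃ N : ℕ, ∀ n : ℕ, N ≤ n →
    (R.fullExp n).Adjacent (R.wordEdge x n (hx.upTo n)).1 (R.wordEdge y n (hy.upTo n)).1

/-- The expanding condition on a replacement system (formulated after the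
identification of the boundary vertices for loop colors). -/
structure Expanding (R : ERS) : Prop where
  no_isolated : ∀ z (v : R.V z), ∃ e : R.E z, R.ini z e = v ∨ R.fin z e = v
  no_bd_edge : ∀ c : R.Col, ¬ R.loopCol c → ∀ e : R.E (some c),
    ¬ ((R.ini (some c) e = R.bIni c ∧ R.fin (some c) e = R.bFin c) ∨
       (R.ini (some c) e = R.bFin c ∧ R.fin (some c) e = R.bIni c))
  two_edges : ∀ c : R.Col, 2 ≤ Fintype.card (R.E (some c))
  interior : ∀ c : R.Col, ∃ v : R.V (some c), v ≠ R.bIni c ∧ v ≠ R.bFin c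

end ERS

/-- `EndAt ι τ v α` : the edge with initial vertex `ι` and terminal vertex `τ`
is incident on `v`, in the fashion recorded by `α`: incoming (`in`), outgoing
(`out`) or a loop (`lp`). -/
inductive EndAt {V : Type} : V → V → V → EType → Prop
  | inn {i v : V} : i ≠ v → EndAt i v v .inn
  | out {t v : V} : v ≠ t → EndAt v t v .out
  | lp {v : V} : EndAt v v v .lp

/-- Two non-loop edges (given by their endpoints) are parallel. -/
def Parallel {V : Type} (ia ta ib tb : V) : Prop :=
  ia ≠ ta ∧ ((ia = ib ∧ ta = tb) ∨ (ia = tb ∧ ta = ib))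

/-- The Type 1 adjacency-type rule for two distinct adjacent edges, given by
their endpoints: parallel non-loops give the `db` types (same or opposite
orientation), and otherwise the unique common vertex `v` determines the types
via `EndAt`. -/
inductive AdjType {V : Type} : V → V → V → V → EType → EType → Prop
  | dbSame {u v : V} : u ≠ v → AdjType u v u v .dbp .dbp
  | dbOpp {u v : V} : u ≠ v → AdjType u v v u .dbp .dbm
  | single {ia ta ib tb v : V} {α β : EType} :
      ¬ Parallel ia ta ib tb → EndAt ia ta v α → EndAt ib tb v β →
      AdjType ia ta ib tb α β

/-- The states of the gluing automaton `Gl_R`. -/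
inductive GlState (R : ERS) : Type
  | q0 : Option R.Col → GlState R
  | q1 : R.Col → EType → R.Col → EType → GlState R

/-- Membership in `Q₀`. -/
def GlState.inQ0 {R : ERS} : GlState R → Prop
  | .q0 _ => True
  | _ => False

/-- Membership in `Q₁`. -/
def GlState.inQ1 {R : ERS} : GlState R → Prop
  | .q1 _ _ _ _ => True
  | _ => False

/-- The defining conditions for states of `Q₁`: `γ ≠ db⁻` and
(`δ ∈ {db⁺, db⁻}` iff `γ = db⁺`). -/
def GlState.Valid {R : ERS} : GlState R → Prop
  | .q0 _ => True
  | .q1 _ γ _ δ => γ ≠ .dbm ∧ ((δ = .dbp ∨ δ = .dbm) ↔ γ = .dbp)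

/-- The tracked boundary vertex of `Γ_c` for a non-`db` symbol:
`τ_c` for `in`, `ι_c` for `out`, and `λ_c` (the identified boundary vertex)
for `lp`. -/
def trackedV (R : ERS) (c : R.Col) : EType → Set (R.V (some c))
  | .inn => {R.bFin c}
  | .out => {R.bIni c}
  | .lp => {R.bIni c}
  | _ => ∅

/-- The pairs of tracked vertices of a state `q₁(i,γ;j,δ)`. -/
inductive TrackedPair (R : ERS) (i j : R.Col) :
    EType → EType → R.V (some i) → R.V (some j) → Prop
  | nondb {γ δ : EType} {u : R.V (some i)} {w : R.V (some j)} :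
      u ∈ trackedV R i γ → w ∈ trackedV R j δ → TrackedPair R i j γ δ u w
  | dbppIni : TrackedPair R i j .dbp .dbp (R.bIni i) (R.bIni j)
  | dbppFin : TrackedPair R i j .dbp .dbp (R.bFin i) (R.bFin j)
  | dbpmIni : TrackedPair R i j .dbp .dbm (R.bIni i) (R.bFin j)
  | dbpmFin : TrackedPair R i j .dbp .dbm (R.bFin i) (R.bIni j)

/-- The transitions of the gluing automaton `Gl_R`. -/
inductive GlTrans (R : ERS) : GlState R → R.Alph × R.Alph → GlState R → Prop
  | type0 (z : Option R.Col) (e : R.E z) :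
      GlTrans R (.q0 z) (⟨z, e⟩, ⟨z, e⟩) (.q0 (some (R.col z e)))
  | type1 (z : Option R.Col) (a b : R.E z) (hab : a ≠ b) {α β : EType}
      (h : AdjType (R.ini z a) (R.fin z a) (R.ini z b) (R.fin z b) α β) :
      GlTrans R (.q0 z) (⟨z, a⟩, ⟨z, b⟩) (.q1 (R.col z a) α (R.col z b) β)
  | type2 (i j : R.Col) (γ δ : EType) (a : R.E (some i)) (b : R.E (some j))
      {u : R.V (some i)} {w : R.V (some j)}
      (hp : TrackedPair R i j γ δ u w) {α β : EType}
      (ha : EndAt (R.ini (some i) a) (R.fin (some i) a) u α)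
      (hb : EndAt (R.ini (some j) b) (R.fin (some j) b) w β) :
      GlTrans R (.q1 i γ j δ) (⟨some i, a⟩, ⟨some j, b⟩)
        (.q1 (R.col (some i) a) α (R.col (some j) b) β)

/-- Infinite runs of `Gl_R` from the initial state `q₀(0)`. -/
def GlRun (R : ERS) (w : ℕ → R.Alph × R.Alph) (q : ℕ → GlState R) : Prop :=
  q 0 = .q0 none ∧ ∀ l : ℕ, GlTrans R (q l) (w l) (q (l + 1))

/-- `Gl_R` recognizes the infinite sequence `w`. -/
def GlAccepts (R : ERS) (w : ℕ → R.Alph × R.Alph) : Prop :=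
  ∃ q : ℕ → GlState R, GlRun R w q

/-- Finite runs of `Gl_R` processing the letters `w 0, …, w m`. -/
def GlRunFin (R : ERS) (w : ℕ → R.Alph × R.Alph) (m : ℕ) (q : ℕ → GlState R) : Prop :=
  q 0 = .q0 none ∧ ∀ l : ℕ, l ≤ m → GlTrans R (q l) (w l) (q (l + 1))

/-- `Gl_R` recognizes the finite word `w 0, …, w m`. -/
def GlAcceptsFin (R : ERS) (w : ℕ → R.Alph × R.Alph) (m : ℕ) : Prop :=
  ∃ q : ℕ → GlState R, GlRunFin R w m q

/-- The transitions of the full sub-automaton `T_R` induced by `Q₀`. -/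
def TTrans (R : ERS) (s : GlState R) (p : R.Alph × R.Alph) (t : GlState R) : Prop :=
  GlTrans R s p t ∧ s.inQ0 ∧ t.inQ0

/-- Finite runs of `T_R` processing the letters `w 0, …, w m`. -/
def TRunFin (R : ERS) (w : ℕ → R.Alph × R.Alph) (m : ℕ) (q : ℕ → GlState R) : Prop :=
  q 0 = .q0 none ∧ ∀ l : ℕ, l ≤ m → TTrans R (q l) (w l) (q (l + 1))

/-- `T_R` recognizes the finite word `w 0, …, w m`. -/
def TAcceptsFin (R : ERS) (w : ℕ → R.Alph × R.Alph) (m : ℕ) : Prop :=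
  ∃ q : ℕ → GlState R, TRunFin R w m q

end ERSPaper

namespace ERSPaper

/-- A synchronous deterministic finite state automaton with a partial
transition function, over the alphabet `A`. -/
structure PAutomaton (A : Type) : Type 1 where
  Q : Type
  [qFintype : Fintype Q]
  init : Q
  trans : Q → A → Option Q

attribute [instance] PAutomaton.qFintype

/-- The automaton recognizes the infinite sequence `w`. -/
def PAutomaton.Accepts {A : Type} (M : PAutomaton A) (w : ℕ → A) : Prop :=
  ∃ q : ℕ → M.Q, q 0 = M.init ∧ ∀ l : ℕ, M.trans (q l) (w l) = some (q (l + 1))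

/-! ### Auxiliary material for the proof -/

section Basic

variable {V W : Type}

theorem EndAt.mem {i t v : V} {α : EType} (h : EndAt i t v α) : i = v ∨ t = v := by
  cases h with
  | inn _ => exact Or.inr rfl
  | out _ => exact Or.inl rfl
  | lp => exact Or.inl rfl

theorem endAt_exists {i t v : V} (hv : i = v ∨ t = v) : ∃ α, EndAt i t v α := by
  classical
  rcases hv with rfl | rfl
  · by_cases h : i = t
    · subst h; exact ⟨.lp, .lp⟩
    · exact ⟨.out, .out h⟩
  · by_cases h : i = t
    · subst h; exact ⟨.lp, .lp⟩
    · exact ⟨.inn, .inn h⟩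

theorem endAt_inn {i t v : V} (h : EndAt i t v .inn) : i ≠ v ∧ t = v := by
  cases h with
  | inn h => exact ⟨h, rfl⟩

theorem endAt_out {i t v : V} (h : EndAt i t v .out) : v ≠ t ∧ i = v := by
  cases h with
  | out h => exact ⟨h, rfl⟩

theorem endAt_lp {i t v : V} (h : EndAt i t v .lp) : i = v ∧ t = v := by
  cases h with
  | lp => exact ⟨rfl, rfl⟩

theorem endAt_dbp {i t v : V} (h : EndAt i t v .dbp) : False := by nomatch h

theorem endAt_dbm {i t v : V} (h : EndAt i t v .dbm) : False := by nomatch h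

theorem endAt_unique {i t v : V} {α β : EType} (h1 : EndAt i t v α) (h2 : EndAt i t v β) :
    α = β := by
  cases α with
  | inn => cases β with
    | inn => rfl
    | out => exact absurd (endAt_out h2).2 (endAt_inn h1).1
    | lp => exact absurd (endAt_lp h2).1 (endAt_inn h1).1
    | dbp => exact (endAt_dbp h2).elim
    | dbm => exact (endAt_dbm h2).elim
  | out => cases β with
    | inn => exact absurd (endAt_out h1).2 (endAt_inn h2).1
    | out => rfl
    | lp => exact absurd (endAt_lp h2).2 (Ne.symm (endAt_out h1).1)
    | dbp => exact (endAt_dbp h2).elim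
    | dbm => exact (endAt_dbm h2).elim
  | lp => cases β with
    | inn => exact absurd (endAt_lp h1).1 (endAt_inn h2).1
    | out => exact absurd (endAt_lp h1).2 (Ne.symm (endAt_out h2).1)
    | lp => rfl
    | dbp => exact (endAt_dbp h2).elim
    | dbm => exact (endAt_dbm h2).elim
  | dbp => exact (endAt_dbp h1).elim
  | dbm => exact (endAt_dbm h1).elim

theorem EndAt.map {f : V → W} (hf : Function.Injective f) {i t v : V} {α : EType}
    (h : EndAt i t v α) : EndAt (f i) (f t) (f v) α := by
  cases h with
  | inn h => exact .inn fun he => h (hf he)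
  | out h => exact .out fun he => h (hf he)
  | lp => exact .lp

theorem parallel_map_iff {f : V → W} (hf : Function.Injective f) {ia ta ib tb : V} :
    Parallel (f ia) (f ta) (f ib) (f tb) ↔ Parallel ia ta ib tb := by
  simp only [Parallel, ne_eq, hf.eq_iff]

theorem adjType_map {f : V → W} (hf : Function.Injective f) {ia ta ib tb : V} {α β : EType}
    (h : AdjType ia ta ib tb α β) : AdjType (f ia) (f ta) (f ib) (f tb) α β := by
  cases h with
  | dbSame h => exact .dbSame fun he => h (hf he)
  | dbOpp h => exact .dbOpp fun he => h (hf he)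
  | single hP ha hb =>
      exact .single (fun hP' => hP ((parallel_map_iff hf).mp hP')) (ha.map hf) (hb.map hf)

theorem adjType_inv {ia ta ib tb : V} {γ δ : EType} (h : AdjType ia ta ib tb γ δ) :
    (γ = .dbp ∧ δ = .dbp ∧ ia ≠ ta ∧ ib = ia ∧ tb = ta) ∨
    (γ = .dbp ∧ δ = .dbm ∧ ia ≠ ta ∧ ib = ta ∧ tb = ia) ∨
    (¬ Parallel ia ta ib tb ∧ ∃ v, EndAt ia ta v γ ∧ EndAt ib tb v δ) := by
  cases h with
  | dbSame h => exact Or.inl ⟨rfl, rfl, h, rfl, rfl⟩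
  | dbOpp h => exact Or.inr (Or.inl ⟨rfl, rfl, h, rfl, rfl⟩)
  | single hP ha hb => exact Or.inr (Or.inr ⟨hP, _, ha, hb⟩)

theorem adjType_exists {ia ta ib tb v : V} (h1 : ia = v ∨ ta = v) (h2 : ib = v ∨ tb = v) :
    ∃ α β, AdjType ia ta ib tb α β := by
  classical
  by_cases hP : Parallel ia ta ib tb
  · obtain ⟨hne, ⟨h3, h4⟩ | ⟨h3, h4⟩⟩ := hP
    · subst h3; subst h4; exact ⟨.dbp, .dbp, .dbSame hne⟩
    · subst h3; subst h4; exact ⟨.dbp, .dbm, .dbOpp hne⟩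
  · obtain ⟨α, hα⟩ := endAt_exists h1
    obtain ⟨β, hβ⟩ := endAt_exists h2
    exact ⟨α, β, .single hP hα hβ⟩

theorem parallel_of_two {ia ta ib tb v v' : V} (hvv : v ≠ v')
    (h1 : ia = v ∨ ta = v) (h2 : ia = v' ∨ ta = v')
    (h3 : ib = v ∨ tb = v) (h4 : ib = v' ∨ tb = v') : Parallel ia ta ib tb := by
  have ha : (ia = v ∧ ta = v') ∨ (ia = v' ∧ ta = v) := by
    rcases h1 with h1 | h1 <;> rcases h2 with h2 | h2
    · exact absurd (h1.symm.trans h2) hvv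
    · exact Or.inl ⟨h1, h2⟩
    · exact Or.inr ⟨h2, h1⟩
    · exact absurd (h1.symm.trans h2) hvv
  have hb : (ib = v ∧ tb = v') ∨ (ib = v' ∧ tb = v) := by
    rcases h3 with h3 | h3 <;> rcases h4 with h4 | h4
    · exact absurd (h3.symm.trans h4) hvv
    · exact Or.inl ⟨h3, h4⟩
    · exact Or.inr ⟨h4, h3⟩
    · exact absurd (h3.symm.trans h4) hvv
  rcases ha with ⟨ha1, ha2⟩ | ⟨ha1, ha2⟩ <;> rcases hb with ⟨hb1, hb2⟩ | ⟨hb1, hb2⟩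
  · exact ⟨by rw [ha1, ha2]; exact hvv, Or.inl ⟨ha1.trans hb1.symm, ha2.trans hb2.symm⟩⟩
  · exact ⟨by rw [ha1, ha2]; exact hvv, Or.inr ⟨ha1.trans hb2.symm, ha2.trans hb1.symm⟩⟩
  · exact ⟨by rw [ha1, ha2]; exact hvv.symm, Or.inr ⟨ha1.trans hb2.symm, ha2.trans hb1.symm⟩⟩
  · exact ⟨by rw [ha1, ha2]; exact hvv.symm, Or.inl ⟨ha1.trans hb1.symm, ha2.trans hb2.symm⟩⟩

theorem adjType_unique {ia ta ib tb : V} {α β α' β' : EType}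
    (h : AdjType ia ta ib tb α β) (h' : AdjType ia ta ib tb α' β') : α = α' ∧ β = β' := by
  classical
  rcases adjType_inv h with ⟨e1, e2, hne, e3, e4⟩ | ⟨e1, e2, hne, e3, e4⟩ |
      ⟨hP, v, hva, hvb⟩ <;>
    rcases adjType_inv h' with ⟨f1, f2, hne', f3, f4⟩ | ⟨f1, f2, hne', f3, f4⟩ |
      ⟨hP', v', hva', hvb'⟩
  · exact ⟨e1.trans f1.symm, e2.trans f2.symm⟩
  · exact absurd (e3.symm.trans f3) hne
  · exact absurd ⟨hne, Or.inl ⟨e3.symm, e4.symm⟩⟩ hP'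
  · exact absurd (e3.symm.trans f3).symm hne
  · exact ⟨e1.trans f1.symm, e2.trans f2.symm⟩
  · exact absurd ⟨hne, Or.inr ⟨e4.symm, e3.symm⟩⟩ hP'
  · exact absurd ⟨hne', Or.inl ⟨f3.symm, f4.symm⟩⟩ hP
  · exact absurd ⟨hne', Or.inr ⟨f4.symm, f3.symm⟩⟩ hP
  · by_cases hvv : v = v'
    · subst hvv; exact ⟨endAt_unique hva hva', endAt_unique hvb hvb'⟩
    · exact absurd (parallel_of_two hvv hva.mem hva'.mem hvb.mem hvb'.mem) hP

end Basic

section GraphLemmas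

variable {R : ERS}

/-- The graphs that can occur in the full expansion sequence: an edge is a loop
iff its color is a loop color. -/
def GoodG (R : ERS) (G : GraphData R) : Prop :=
  ∀ e : G.E, G.ι e = G.τ e ↔ R.loopCol (G.col e)

theorem goodG_base (R : ERS) : GoodG R R.base := fun e => R.loop_iff none e

theorem attach_interior {G : GraphData R} (e : G.E) {v : R.V (some (G.col e))}
    (h2 : v ≠ R.bIni (G.col e)) (h3 : v ≠ R.bFin (G.col e)) :
    R.attach G e v = Sum.inr ⟨e, v, h2, h3⟩ := by
  unfold ERS.attach; rw [dif_neg h2, dif_neg h3]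

theorem attach_bIni (G : GraphData R) (e : G.E) :
    R.attach G e (R.bIni (G.col e)) = Sum.inl (G.ι e) := dif_pos rfl

theorem attach_bFin {G : GraphData R} (hG : GoodG R G) (e : G.E) :
    R.attach G e (R.bFin (G.col e)) = Sum.inl (G.τ e) := by
  unfold ERS.attach
  split_ifs with h1 h2
  · have : R.loopCol (G.col e) := (R.bd_eq_iff _).mp h1.symm
    rw [(hG e).mpr this]
  · rfl
  · exact absurd rfl h2

theorem attach_eq' {G : GraphData R} (hG : GoodG R G) (e : G.E) (u : R.V (some (G.col e))) :
    (u = R.bIni (G.col e) ∧ R.attach G e u = Sum.inl (G.ι e)) ∨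
    (u = R.bFin (G.col e) ∧ R.attach G e u = Sum.inl (G.τ e)) ∨
    (∃ (h2 : u ≠ R.bIni (G.col e)) (h3 : u ≠ R.bFin (G.col e)),
      R.attach G e u = Sum.inr ⟨e, u, h2, h3⟩) := by
  classical
  by_cases h1 : u = R.bIni (G.col e)
  · exact Or.inl ⟨h1, by rw [h1, attach_bIni]⟩
  · by_cases h2 : u = R.bFin (G.col e)
    · exact Or.inr (Or.inl ⟨h2, by rw [h2, attach_bFin hG]⟩)
    · exact Or.inr (Or.inr ⟨h1, h2, attach_interior e h1 h2⟩)

theorem attach_injective {G : GraphData R} (hG : GoodG R G) (e : G.E) :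
    Function.Injective (R.attach G e) := by
  intro u v h
  have hbd : G.ι e = G.τ e → R.bIni (G.col e) = R.bFin (G.col e) := fun hh =>
    (R.bd_eq_iff _).mpr ((hG e).mp hh)
  rcases attach_eq' hG e u with ⟨hu1, hu2⟩ | ⟨hu1, hu2⟩ | ⟨hu1, hu2, hu3⟩ <;>
    rcases attach_eq' hG e v with ⟨hv1, hv2⟩ | ⟨hv1, hv2⟩ | ⟨hv1, hv2, hv3⟩
  · exact hu1.trans hv1.symm
  · rw [hu2, hv2] at h
    have hιτ : G.ι e = G.τ e := by injection h
    exact hu1.trans ((hbd hιτ).trans hv1.symm)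
  · rw [hu2, hv3] at h; exact absurd h (by simp)
  · rw [hu2, hv2] at h
    have hιτ : G.ι e = G.τ e := by injection h with h; exact h.symm
    exact hu1.trans ((hbd hιτ).symm.trans hv1.symm)
  · exact hu1.trans hv1.symm
  · rw [hu2, hv3] at h; exact absurd h (by simp)
  · rw [hu3, hv2] at h; exact absurd h (by simp)
  · rw [hu3, hv2] at h; exact absurd h (by simp)
  · rw [hu3, hv3] at h
    injection h with h
    injection h with h1 h2
    exact congrArg Subtype.val h2

theorem attach_eq_inl {G : GraphData R} (hG : GoodG R G) (e : G.E)
    {u : R.V (some (G.col e))} {p : G.V} (h : R.attach G e u = Sum.inl p) :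
    (u = R.bIni (G.col e) ∧ p = G.ι e) ∨ (u = R.bFin (G.col e) ∧ p = G.τ e) := by
  rcases attach_eq' hG e u with ⟨hu1, hu2⟩ | ⟨hu1, hu2⟩ | ⟨hu1, hu2, hu3⟩
  · refine Or.inl ⟨hu1, ?_⟩
    have := hu2.symm.trans h
    injection this with this; exact this.symm
  · refine Or.inr ⟨hu1, ?_⟩
    have := hu2.symm.trans h
    injection this with this; exact this.symm
  · exact absurd (hu3.symm.trans h) (by simp)

theorem attach_eq_inr {G : GraphData R} (hG : GoodG R G) (e : G.E)
    {u : R.V (some (G.col e))} {s}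
    (h : R.attach G e u = Sum.inr s) : s.1 = e := by
  rcases attach_eq' hG e u with ⟨hu1, hu2⟩ | ⟨hu1, hu2⟩ | ⟨hu1, hu2, hu3⟩
  · exact absurd (hu2.symm.trans h) (by simp)
  · exact absurd (hu2.symm.trans h) (by simp)
  · have := hu3.symm.trans h
    injection this with this
    exact (congrArg Sigma.fst this).symm

theorem attach_cross {G : GraphData R} (hG : GoodG R G) {e f : G.E} (hef : e ≠ f)
    {u : R.V (some (G.col e))} {w : R.V (some (G.col f))}
    (h : R.attach G e u = R.attach G f w) :
    ∃ p : G.V,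
      ((u = R.bIni (G.col e) ∧ p = G.ι e) ∨ (u = R.bFin (G.col e) ∧ p = G.τ e)) ∧
      ((w = R.bIni (G.col f) ∧ p = G.ι f) ∨ (w = R.bFin (G.col f) ∧ p = G.τ f)) := by
  cases hu : R.attach G e u with
  | inl p =>
      exact ⟨p, attach_eq_inl hG e hu, attach_eq_inl hG f (h.symm.trans hu)⟩
  | inr s =>
      exact absurd ((attach_eq_inr hG e hu).symm.trans (attach_eq_inr hG f (h.symm.trans hu)))
        hef

theorem goodG_expand {G : GraphData R} (hG : GoodG R G) : GoodG R (R.expandG G) := by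
  rintro ⟨e, a⟩
  show R.attach G e (R.ini _ a) = R.attach G e (R.fin _ a) ↔ R.loopCol (R.col _ a)
  rw [← R.loop_iff]
  exact ⟨fun h => attach_injective hG e h, fun h => congrArg _ h⟩

theorem goodG_fullExp (R : ERS) : ∀ m, GoodG R (R.fullExp m)
  | 0 => goodG_base R
  | m + 1 => goodG_expand (goodG_fullExp R m)

theorem no_parallel_children (hR : R.Expanding) {G : GraphData R} (hG : GoodG R G)
    {e f : G.E} (hef : e ≠ f) (a : R.E (some (G.col e))) (b : R.E (some (G.col f))) :
    ¬ Parallel ((R.expandG G).ι ⟨e, a⟩) ((R.expandG G).τ ⟨e, a⟩)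
        ((R.expandG G).ι ⟨f, b⟩) ((R.expandG G).τ ⟨f, b⟩) := by
  rintro ⟨hne, h | h⟩ <;>
  · obtain ⟨h1, h2⟩ := h
    obtain ⟨p, hu, -⟩ := attach_cross hG hef h1
    obtain ⟨p', hu', -⟩ := attach_cross hG hef h2
    have hia : R.ini _ a ≠ R.fin _ a := fun hh => hne (congrArg (R.attach G e) hh)
    have hu1 := hu.imp And.left And.left
    have hu2 := hu'.imp And.left And.left
    have hbd : R.bIni (G.col e) ≠ R.bFin (G.col e) := by
      intro hbb
      rcases hu1 with h' | h' <;> rcases hu2 with h'' | h'' <;>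
        first
          | exact hia (h'.trans h''.symm)
          | exact hia (h'.trans (hbb.symm.trans h''.symm))
          | exact hia (h'.trans (hbb.trans h''.symm))
    have hloop : ¬ R.loopCol (G.col e) := fun hl => hbd ((R.bd_eq_iff _).mpr hl)
    apply hR.no_bd_edge (G.col e) hloop a
    rcases hu1 with h' | h' <;> rcases hu2 with h'' | h''
    · exact absurd (h'.trans h''.symm) hia
    · exact Or.inl ⟨h', h''⟩
    · exact Or.inr ⟨h', h''⟩
    · exact absurd (h'.trans h''.symm) hia

theorem tracked_single {G : GraphData R} (hG : GoodG R G) {e : G.E} {v : G.V} {γ : EType}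
    (h : EndAt (G.ι e) (G.τ e) v γ) {u : R.V (some (G.col e))}
    (hu : u ∈ trackedV R (G.col e) γ) :
    R.attach G e u = Sum.inl v := by
  cases γ with
  | inn =>
      have hu' : u = R.bFin (G.col e) := hu
      rw [hu', attach_bFin hG, (endAt_inn h).2]
  | out =>
      have hu' : u = R.bIni (G.col e) := hu
      rw [hu', attach_bIni, (endAt_out h).2]
  | lp =>
      have hu' : u = R.bIni (G.col e) := hu
      rw [hu', attach_bIni, (endAt_lp h).1]
  | dbp => exact (endAt_dbp h).elim
  | dbm => exact (endAt_dbm h).elim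

theorem tracked_common {G : GraphData R} (hG : GoodG R G) {e f : G.E} {γ δ : EType}
    (hA : AdjType (G.ι e) (G.τ e) (G.ι f) (G.τ f) γ δ)
    {u : R.V (some (G.col e))} {w : R.V (some (G.col f))}
    (hp : TrackedPair R (G.col e) (G.col f) γ δ u w) :
    R.attach G e u = R.attach G f w := by
  cases hp with
  | nondb hu hw =>
      rcases adjType_inv hA with ⟨rfl, -⟩ | ⟨rfl, -⟩ | ⟨-, v, hva, hvb⟩
      · exact absurd hu (by simp [trackedV])
      · exact absurd hu (by simp [trackedV])
      · rw [tracked_single hG hva hu, tracked_single hG hvb hw]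
  | dbppIni =>
      rcases adjType_inv hA with ⟨-, -, -, h3, -⟩ | ⟨-, h2, -⟩ | ⟨-, v, hva, -⟩
      · rw [attach_bIni, attach_bIni, h3]
      · exact absurd h2 (by simp)
      · exact (endAt_dbp hva).elim
  | dbppFin =>
      rcases adjType_inv hA with ⟨-, -, -, -, h4⟩ | ⟨-, h2, -⟩ | ⟨-, v, hva, -⟩
      · rw [attach_bFin hG, attach_bFin hG, h4]
      · exact absurd h2 (by simp)
      · exact (endAt_dbp hva).elim
  | dbpmIni =>
      rcases adjType_inv hA with ⟨-, h2, -⟩ | ⟨-, -, -, -, h4⟩ | ⟨-, v, hva, -⟩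
      · exact absurd h2 (by simp)
      · rw [attach_bIni, attach_bFin hG, h4]
      · exact (endAt_dbp hva).elim
  | dbpmFin =>
      rcases adjType_inv hA with ⟨-, h2, -⟩ | ⟨-, -, -, h3, -⟩ | ⟨-, v, hva, -⟩
      · exact absurd h2 (by simp)
      · rw [attach_bFin hG, attach_bIni, h3]
      · exact (endAt_dbp hva).elim

theorem step_sound_adj (hR : R.Expanding) {G : GraphData R} (hG : GoodG R G)
    {e f : G.E} (hef : e ≠ f) {γ δ : EType}
    (hA : AdjType (G.ι e) (G.τ e) (G.ι f) (G.τ f) γ δ)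
    {a : R.E (some (G.col e))} {b : R.E (some (G.col f))}
    {u : R.V (some (G.col e))} {w : R.V (some (G.col f))} {α β : EType}
    (hp : TrackedPair R (G.col e) (G.col f) γ δ u w)
    (ha : EndAt (R.ini _ a) (R.fin _ a) u α) (hb : EndAt (R.ini _ b) (R.fin _ b) w β) :
    AdjType ((R.expandG G).ι ⟨e, a⟩) ((R.expandG G).τ ⟨e, a⟩)
      ((R.expandG G).ι ⟨f, b⟩) ((R.expandG G).τ ⟨f, b⟩) α β := by
  have hcom := tracked_common hG hA hp
  refine AdjType.single (v := R.attach G e u) (no_parallel_children hR hG hef a b) ?_ ?_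
  · exact ha.map (attach_injective hG e)
  · rw [hcom]; exact hb.map (attach_injective hG f)

theorem tracked_of {G : GraphData R} (hG : GoodG R G) {e : G.E} {v : G.V} {γ : EType}
    (hend : EndAt (G.ι e) (G.τ e) v γ) {u : R.V (some (G.col e))}
    (hu : (u = R.bIni (G.col e) ∧ v = G.ι e) ∨ (u = R.bFin (G.col e) ∧ v = G.τ e)) :
    u ∈ trackedV R (G.col e) γ := by
  cases γ with
  | inn =>
      obtain ⟨hne, ht⟩ := endAt_inn hend
      rcases hu with ⟨h1, h2⟩ | ⟨h1, h2⟩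
      · exact absurd h2.symm hne
      · exact h1
  | out =>
      obtain ⟨hne, ht⟩ := endAt_out hend
      rcases hu with ⟨h1, h2⟩ | ⟨h1, h2⟩
      · exact h1
      · exact absurd h2 hne
  | lp =>
      obtain ⟨h1, h2⟩ := endAt_lp hend
      have hl : R.bIni (G.col e) = R.bFin (G.col e) :=
        (R.bd_eq_iff _).mpr ((hG e).mp (h1.trans h2.symm))
      rcases hu with ⟨h3, -⟩ | ⟨h3, -⟩
      · exact h3
      · show u = R.bIni (G.col e); rw [h3, hl]
  | dbp => exact (endAt_dbp hend).elim
  | dbm => exact (endAt_dbm hend).elim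

theorem expand_adjacent_tracked {G : GraphData R} (hG : GoodG R G)
    {e f : G.E} (hef : e ≠ f) {γ δ : EType}
    (hA : AdjType (G.ι e) (G.τ e) (G.ι f) (G.τ f) γ δ)
    {a : R.E (some (G.col e))} {b : R.E (some (G.col f))}
    (hadj : (R.expandG G).Adjacent ⟨e, a⟩ ⟨f, b⟩) :
    ∃ u w α β, TrackedPair R (G.col e) (G.col f) γ δ u w ∧
      EndAt (R.ini _ a) (R.fin _ a) u α ∧ EndAt (R.ini _ b) (R.fin _ b) w β := by
  obtain ⟨v', hv1, hv2⟩ := hadj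
  have key : ∀ (xa : R.V (some (G.col e))) (xb : R.V (some (G.col f))),
      (R.ini _ a = xa ∨ R.fin _ a = xa) → (R.ini _ b = xb ∨ R.fin _ b = xb) →
      R.attach G e xa = R.attach G f xb →
      ∃ u w α β, TrackedPair R (G.col e) (G.col f) γ δ u w ∧
        EndAt (R.ini _ a) (R.fin _ a) u α ∧ EndAt (R.ini _ b) (R.fin _ b) w β := by
    intro xa xb hia hib hcross
    obtain ⟨p, hu, hw⟩ := attach_cross hG hef hcross
    obtain ⟨α, hα⟩ := endAt_exists hia
    obtain ⟨β, hβ⟩ := endAt_exists hib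
    refine ⟨xa, xb, α, β, ?_, hα, hβ⟩
    rcases adjType_inv hA with ⟨rfl, rfl, hne, h3, h4⟩ | ⟨rfl, rfl, hne, h3, h4⟩ |
        ⟨hP, v, hva, hvb⟩
    · -- dbSame
      rcases hu with ⟨hu1, hu2⟩ | ⟨hu1, hu2⟩ <;> rcases hw with ⟨hw1, hw2⟩ | ⟨hw1, hw2⟩
      · rw [hu1, hw1]; exact .dbppIni
      · exact absurd ((hu2.symm.trans hw2).trans h4) hne
      · exact absurd ((hu2.symm.trans hw2).trans h3).symm hne
      · rw [hu1, hw1]; exact .dbppFin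
    · -- dbOpp
      rcases hu with ⟨hu1, hu2⟩ | ⟨hu1, hu2⟩ <;> rcases hw with ⟨hw1, hw2⟩ | ⟨hw1, hw2⟩
      · exact absurd ((hu2.symm.trans hw2).trans h3) hne
      · rw [hu1, hw1]; exact .dbpmIni
      · rw [hu1, hw1]; exact .dbpmFin
      · exact absurd ((hu2.symm.trans hw2).trans h4).symm hne
    · -- single
      have hpe : G.ι e = p ∨ G.τ e = p := hu.imp (fun h => h.2.symm) (fun h => h.2.symm)
      have hpf : G.ι f = p ∨ G.τ f = p := hw.imp (fun h => h.2.symm) (fun h => h.2.symm)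
      have hpv : p = v := by
        by_contra hpv
        exact hP (parallel_of_two hpv hpe hva.mem hpf hvb.mem)
      subst hpv
      exact .nondb (tracked_of hG hva hu) (tracked_of hG hvb hw)
  rcases hv1 with h1 | h1 <;> rcases hv2 with h2 | h2
  · exact key _ _ (Or.inl rfl) (Or.inl rfl) (h1.trans h2.symm)
  · exact key _ _ (Or.inl rfl) (Or.inr rfl) (h1.trans h2.symm)
  · exact key _ _ (Or.inr rfl) (Or.inl rfl) (h1.trans h2.symm)
  · exact key _ _ (Or.inr rfl) (Or.inr rfl) (h1.trans h2.symm)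

theorem adjacent_down {G : GraphData R} (hG : GoodG R G) {e f : G.E}
    {a : R.E (some (G.col e))} {b : R.E (some (G.col f))}
    (h : (R.expandG G).Adjacent ⟨e, a⟩ ⟨f, b⟩) : G.Adjacent e f := by
  classical
  by_cases hef : e = f
  · subst hef; exact ⟨G.ι e, Or.inl rfl, Or.inl rfl⟩
  · obtain ⟨v, h1, h2⟩ := h
    have : ∃ (xa : R.V (some (G.col e))) (xb : R.V (some (G.col f))),
        R.attach G e xa = R.attach G f xb := by
      rcases h1 with h1 | h1 <;> rcases h2 with h2 | h2 <;> exact ⟨_, _, h1.trans h2.symm⟩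
    obtain ⟨xa, xb, hx⟩ := this
    obtain ⟨p, hu, hw⟩ := attach_cross hG hef hx
    exact ⟨p, hu.imp (fun h => h.2.symm) (fun h => h.2.symm),
      hw.imp (fun h => h.2.symm) (fun h => h.2.symm)⟩

end GraphLemmas

section Determinism

variable {R : ERS}

theorem not_both_bd (hR : R.Expanding) {c : R.Col} {a : R.E (some c)}
    (hne : R.bIni c ≠ R.bFin c)
    (h1 : R.ini _ a = R.bIni c ∨ R.fin _ a = R.bIni c)
    (h2 : R.ini _ a = R.bFin c ∨ R.fin _ a = R.bFin c) : False := by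
  have hl : ¬ R.loopCol c := fun hl => hne ((R.bd_eq_iff c).mpr hl)
  apply hR.no_bd_edge c hl a
  rcases h1 with h1 | h1 <;> rcases h2 with h2 | h2
  · exact absurd (h1.symm.trans h2) hne
  · exact Or.inl ⟨h1, h2⟩
  · exact Or.inr ⟨h2, h1⟩
  · exact absurd (h1.symm.trans h2) hne

theorem trackedV_subsingleton {c : R.Col} {γ : EType} {u u' : R.V (some c)}
    (h : u ∈ trackedV R c γ) (h' : u' ∈ trackedV R c γ) : u = u' := by
  cases γ with
  | inn => exact (show u = _ from h).trans (show u' = _ from h').symm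
  | out => exact (show u = _ from h).trans (show u' = _ from h').symm
  | lp => exact (show u = _ from h).trans (show u' = _ from h').symm
  | dbp => exact absurd h (by simp [trackedV])
  | dbm => exact absurd h (by simp [trackedV])

theorem trackedPair_unique (hR : R.Expanding) {i j : R.Col} {γ δ : EType}
    {u u' : R.V (some i)} {w w' : R.V (some j)}
    (hp : TrackedPair R i j γ δ u w) (hp' : TrackedPair R i j γ δ u' w')
    {a : R.E (some i)} {b : R.E (some j)} {α β α' β' : EType}
    (ha : EndAt (R.ini _ a) (R.fin _ a) u α) (hb : EndAt (R.ini _ b) (R.fin _ b) w β)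
    (ha' : EndAt (R.ini _ a) (R.fin _ a) u' α') (hb' : EndAt (R.ini _ b) (R.fin _ b) w' β') :
    α = α' ∧ β = β' := by
  classical
  have key : u = u' → w = w' → α = α' ∧ β = β' := fun h1 h2 =>
    ⟨endAt_unique ha (h1 ▸ ha'), endAt_unique hb (h2 ▸ hb')⟩
  have hiu : ∀ {p q : R.V (some i)}, p = R.bIni i ∨ p = R.bFin i →
      q = R.bIni i ∨ q = R.bFin i → EndAt (R.ini _ a) (R.fin _ a) p α →
      EndAt (R.ini _ a) (R.fin _ a) q α' → p = q := by
    intro p q hp1 hq1 hpa hqa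
    by_cases hbd : R.bIni i = R.bFin i
    · rcases hp1 with rfl | rfl <;> rcases hq1 with rfl | rfl <;>
        first | rfl | exact hbd | exact hbd.symm
    · rcases hp1 with rfl | rfl <;> rcases hq1 with rfl | rfl
      · rfl
      · exact absurd (not_both_bd hR hbd hpa.mem hqa.mem) not_false
      · exact absurd (not_both_bd hR hbd hqa.mem hpa.mem) not_false
      · rfl
  have hjw : ∀ {p q : R.V (some j)}, p = R.bIni j ∨ p = R.bFin j →
      q = R.bIni j ∨ q = R.bFin j → EndAt (R.ini _ b) (R.fin _ b) p β →
      EndAt (R.ini _ b) (R.fin _ b) q β' → p = q := by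
    intro p q hp1 hq1 hpb hqb
    by_cases hbd : R.bIni j = R.bFin j
    · rcases hp1 with rfl | rfl <;> rcases hq1 with rfl | rfl <;>
        first | rfl | exact hbd | exact hbd.symm
    · rcases hp1 with rfl | rfl <;> rcases hq1 with rfl | rfl
      · rfl
      · exact absurd (not_both_bd hR hbd hpb.mem hqb.mem) not_false
      · exact absurd (not_both_bd hR hbd hqb.mem hpb.mem) not_false
      · rfl
  cases hp with
  | nondb hu hw =>
      cases hp' with
      | nondb hu' hw' => exact key (trackedV_subsingleton hu hu') (trackedV_subsingleton hw hw')
      | dbppIni => exact absurd hu (by simp [trackedV])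
      | dbppFin => exact absurd hu (by simp [trackedV])
      | dbpmIni => exact absurd hu (by simp [trackedV])
      | dbpmFin => exact absurd hu (by simp [trackedV])
  | dbppIni =>
      cases hp' with
      | nondb hu' hw' => exact absurd hu' (by simp [trackedV])
      | dbppIni => exact key rfl rfl
      | dbppFin =>
          exact key (hiu (Or.inl rfl) (Or.inr rfl) ha ha') (hjw (Or.inl rfl) (Or.inr rfl) hb hb')
  | dbppFin =>
      cases hp' with
      | nondb hu' hw' => exact absurd hu' (by simp [trackedV])
      | dbppIni =>
          exact key (hiu (Or.inr rfl) (Or.inl rfl) ha ha') (hjw (Or.inr rfl) (Or.inl rfl) hb hb')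
      | dbppFin => exact key rfl rfl
  | dbpmIni =>
      cases hp' with
      | nondb hu' hw' => exact absurd hu' (by simp [trackedV])
      | dbpmIni => exact key rfl rfl
      | dbpmFin =>
          exact key (hiu (Or.inl rfl) (Or.inr rfl) ha ha') (hjw (Or.inr rfl) (Or.inl rfl) hb hb')
  | dbpmFin =>
      cases hp' with
      | nondb hu' hw' => exact absurd hu' (by simp [trackedV])
      | dbpmIni =>
          exact key (hiu (Or.inr rfl) (Or.inl rfl) ha ha') (hjw (Or.inl rfl) (Or.inr rfl) hb hb')
      | dbpmFin => exact key rfl rfl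

theorem glTrans_det (hR : R.Expanding) {s : GlState R} {p : R.Alph × R.Alph}
    {t t' : GlState R} (h : GlTrans R s p t) (h' : GlTrans R s p t') : t = t' := by
  cases h with
  | type0 z e =>
      cases h' with
      | type0 _ _ => rfl
      | type1 _ _ _ hab _ => exact absurd rfl hab
  | type1 z a b hab hA =>
      cases h' with
      | type0 _ _ => exact absurd rfl hab
      | type1 _ _ _ hab' hA' =>
          obtain ⟨h1, h2⟩ := adjType_unique hA hA'
          rw [h1, h2]
  | type2 i j γ δ a b hp ha hb =>
      cases h' with
      | type2 _ _ _ _ _ _ hp' ha' hb' =>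
          obtain ⟨h1, h2⟩ := trackedPair_unique hR hp hp' ha hb ha' hb'
          rw [h1, h2]

end Determinism


section RunLemmas

variable {R : ERS}

theorem sigma_eq_mk' {Z : Type} {E : Z → Type} (p : Σ z, E z) {z : Z} (h : p.1 = z) :
    p = ⟨z, cast (congrArg E h) p.2⟩ := by
  rcases p with ⟨z', q⟩
  subst h
  rfl

theorem cast_snd {Z : Type} {E : Z → Type} {p : Σ z, E z} {z : Z} (h : p.1 = z) {q : E z}
    (hq : p = ⟨z, q⟩) : cast (congrArg E h) p.2 = q := by
  subst hq; rfl

theorem cast_snd_congr {Z : Type} {E : Z → Type} {p q : Σ z, E z} (hpq : p = q) {z : Z}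
    (h1 : p.1 = z) (h2 : q.1 = z) :
    cast (congrArg E h1) p.2 = cast (congrArg E h2) q.2 := by
  subst hpq; rfl

theorem sigma_snd_eq {Z : Type} {E : Z → Type} {z : Z} {a b : E z}
    (h : (⟨z, a⟩ : Σ z, E z) = ⟨z, b⟩) : a = b := by
  injection h

theorem ERS.IsWalkUpTo.of_succ {x : ℕ → R.Alph} {n : ℕ} (h : R.IsWalkUpTo x (n + 1)) :
    R.IsWalkUpTo x n := ⟨h.1, fun l hl => h.2 l (Nat.lt_succ_of_lt hl)⟩

theorem wordEdge_succ_spec {x : ℕ → R.Alph} (n : ℕ) (hx : R.IsWalkUpTo x (n + 1))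
    (hx' : R.IsWalkUpTo x n) :
    ∃ a : R.E (some ((R.fullExp n).col (R.wordEdge x n hx').1)),
      x (n + 1) = ⟨some ((R.fullExp n).col (R.wordEdge x n hx').1), a⟩ ∧
      (R.wordEdge x (n + 1) hx).1 = ⟨(R.wordEdge x n hx').1, a⟩ := by
  have h : (x (n + 1)).1 = some ((R.fullExp n).col (R.wordEdge x n hx').1) :=
    (hx.2 n (Nat.lt_succ_self n)).trans (congrArg some (R.wordEdge x n hx').2.symm)
  exact ⟨cast (congrArg R.E h) (x (n + 1)).2, sigma_eq_mk' _ h, rfl⟩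

theorem wordEdge_succ_spec' {x : ℕ → R.Alph} (n : ℕ) (hx : R.IsWalkUpTo x (n + 1))
    (hx' : R.IsWalkUpTo x n) {e : (R.fullExp n).E} (he : (R.wordEdge x n hx').1 = e) :
    ∃ a : R.E (some ((R.fullExp n).col e)),
      x (n + 1) = ⟨some ((R.fullExp n).col e), a⟩ ∧
      (R.wordEdge x (n + 1) hx).1 = ⟨e, a⟩ := by
  subst he; exact wordEdge_succ_spec n hx hx'

theorem wordEdge_congr {x y : ℕ → R.Alph} :
    ∀ (m : ℕ), (∀ l, l ≤ m → x l = y l) → ∀ (hx : R.IsWalkUpTo x m) (hy : R.IsWalkUpTo y m),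
      (R.wordEdge x m hx).1 = (R.wordEdge y m hy).1
  | 0, h, hx, hy => cast_snd_congr (h 0 (le_refl 0)) hx.1 hy.1
  | m + 1, h, hx, hy => by
    have ih := wordEdge_congr m (fun l hl => h l (hl.trans (Nat.le_succ m)))
      hx.of_succ hy.of_succ
    obtain ⟨a, hxa, hxE⟩ := wordEdge_succ_spec m hx hx.of_succ
    obtain ⟨b, hyb, hyE⟩ := wordEdge_succ_spec' m hy hy.of_succ ih.symm
    rw [hxE, hyE]
    have hab : a = b := sigma_snd_eq (hxa.symm.trans ((h (m + 1) (le_refl _)).trans hyb))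
    rw [hab]

/-- The invariant tying the state of the gluing automaton after `n + 1` letters
to the geometry of the corresponding edges of the full expansion `E_n`. -/
def Inv (R : ERS) (x y : ℕ → R.Alph) (n : ℕ) (hx : R.IsWalkUpTo x n)
    (hy : R.IsWalkUpTo y n) : GlState R → Prop
  | .q0 z => (∀ l, l ≤ n → x l = y l) ∧ z = some (R.col (x n).1 (x n).2)
  | .q1 i γ j δ => i = R.col (x n).1 (x n).2 ∧ j = R.col (y n).1 (y n).2 ∧
      (R.wordEdge x n hx).1 ≠ (R.wordEdge y n hy).1 ∧
      AdjType ((R.fullExp n).ι (R.wordEdge x n hx).1) ((R.fullExp n).τ (R.wordEdge x n hx).1)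
        ((R.fullExp n).ι (R.wordEdge y n hy).1) ((R.fullExp n).τ (R.wordEdge y n hy).1) γ δ

theorem inv_adjacent {x y : ℕ → R.Alph} {n : ℕ} {hx : R.IsWalkUpTo x n}
    {hy : R.IsWalkUpTo y n} {s : GlState R} (hs : Inv R x y n hx hy s) :
    (R.fullExp n).Adjacent (R.wordEdge x n hx).1 (R.wordEdge y n hy).1 := by
  cases s with
  | q0 z =>
      rw [wordEdge_congr n hs.1 hx hy]
      exact ⟨(R.fullExp n).ι (R.wordEdge y n hy).1, Or.inl rfl, Or.inl rfl⟩
  | q1 i γ j δ =>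
      obtain ⟨-, -, -, hA⟩ := hs
      rcases adjType_inv hA with ⟨-, -, -, h3, -⟩ | ⟨-, -, -, -, h4⟩ | ⟨-, v, hva, hvb⟩
      · exact ⟨_, Or.inl rfl, Or.inl h3⟩
      · exact ⟨_, Or.inl rfl, Or.inr h4⟩
      · exact ⟨v, hva.mem, hvb.mem⟩

theorem glTrans_none {t : GlState R} {p : R.Alph × R.Alph} (h : GlTrans R (.q0 none) p t) :
    p.1.1 = none ∧ p.2.1 = none := by
  cases h with
  | type0 z e => exact ⟨rfl, rfl⟩
  | type1 z a b hab hA => exact ⟨rfl, rfl⟩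

theorem glTrans_chain {s t u : GlState R} {p q : R.Alph × R.Alph} (h1 : GlTrans R s p t)
    (h2 : GlTrans R t q u) :
    q.1.1 = some (R.col p.1.1 p.1.2) ∧ q.2.1 = some (R.col p.2.1 p.2.2) := by
  cases h1 <;> cases h2 <;> exact ⟨rfl, rfl⟩

theorem base_sound {x y : ℕ → R.Alph} (hx : R.IsWalkUpTo x 0) (hy : R.IsWalkUpTo y 0)
    {p : R.Alph × R.Alph} (hp1 : p.1 = x 0) (hp2 : p.2 = y 0)
    {t : GlState R} (ht : GlTrans R (.q0 none) p t) : Inv R x y 0 hx hy t := by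
  cases ht with
  | type0 z e =>
      have hx1 : (⟨none, e⟩ : R.Alph) = x 0 := hp1
      have hy1 : (⟨none, e⟩ : R.Alph) = y 0 := hp2
      refine ⟨fun l hl => ?_, by rw [← hx1]⟩
      obtain rfl := Nat.le_zero.mp hl
      exact hx1.symm.trans hy1
  | type1 z a b hab hA =>
      have hx1 : (⟨none, a⟩ : R.Alph) = x 0 := hp1
      have hy1 : (⟨none, b⟩ : R.Alph) = y 0 := hp2
      have he : (R.wordEdge x 0 hx).1 = a := cast_snd hx.1 hx1.symm
      have hf : (R.wordEdge y 0 hy).1 = b := cast_snd hy.1 hy1.symm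
      refine ⟨by rw [← hx1], by rw [← hy1], ?_, ?_⟩
      · rw [he, hf]; exact hab
      · rw [he, hf]; exact hA

theorem step_sound (hR : R.Expanding) {x y : ℕ → R.Alph} {n : ℕ}
    (hx : R.IsWalkUpTo x (n + 1)) (hy : R.IsWalkUpTo y (n + 1))
    {s : GlState R} (hs : Inv R x y n hx.of_succ hy.of_succ s)
    {p : R.Alph × R.Alph} (hp1 : p.1 = x (n + 1)) (hp2 : p.2 = y (n + 1))
    {t : GlState R} (ht : GlTrans R s p t) : Inv R x y (n + 1) hx hy t := by
  cases ht with
  | type0 z e =>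
      obtain ⟨hpre, hz⟩ := hs
      have hx1 : (⟨z, e⟩ : R.Alph) = x (n + 1) := hp1
      have hy1 : (⟨z, e⟩ : R.Alph) = y (n + 1) := hp2
      refine ⟨fun l hl => ?_, by rw [← hx1]⟩
      rcases (by omega : l ≤ n ∨ l = n + 1) with h | rfl
      · exact hpre l h
      · exact hx1.symm.trans hy1
  | type1 z a b hab hA =>
      obtain ⟨hpre, hz⟩ := hs
      have hx1 : (⟨z, a⟩ : R.Alph) = x (n + 1) := hp1
      have hy1 : (⟨z, b⟩ : R.Alph) = y (n + 1) := hp2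
      have hz1 : z = (x (n + 1)).1 := congrArg Sigma.fst hx1
      have hcol : z = some ((R.fullExp n).col (R.wordEdge x n hx.of_succ).1) :=
        hz1.trans ((hx.2 n (Nat.lt_succ_self n)).trans
          (congrArg some (R.wordEdge x n hx.of_succ).2.symm))
      subst hcol
      obtain ⟨A, hxA, hxE⟩ := wordEdge_succ_spec n hx hx.of_succ
      obtain ⟨B, hyB, hyE⟩ := wordEdge_succ_spec' n hy hy.of_succ
        (wordEdge_congr n (fun l hl => (hpre l hl).symm) hy.of_succ hx.of_succ)
      obtain rfl : A = a := sigma_snd_eq (hxA.symm.trans hx1.symm)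
      obtain rfl : B = b := sigma_snd_eq (hyB.symm.trans hy1.symm)
      refine ⟨by rw [← hx1], by rw [← hy1], ?_, ?_⟩
      · rw [hxE, hyE]
        exact fun hcon => hab (by injection hcon)
      · rw [hxE, hyE]
        exact adjType_map (attach_injective (goodG_fullExp R n) _) hA
  | type2 i j γ δ a b hp ha hb =>
      obtain ⟨hi, hj, hne, hA⟩ := hs
      have hx1 : (⟨some i, a⟩ : R.Alph) = x (n + 1) := hp1
      have hy1 : (⟨some j, b⟩ : R.Alph) = y (n + 1) := hp2
      have hi2 : i = (R.fullExp n).col (R.wordEdge x n hx.of_succ).1 :=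
        hi.trans (R.wordEdge x n hx.of_succ).2.symm
      have hj2 : j = (R.fullExp n).col (R.wordEdge y n hy.of_succ).1 :=
        hj.trans (R.wordEdge y n hy.of_succ).2.symm
      subst hi2; subst hj2
      obtain ⟨A, hxA, hxE⟩ := wordEdge_succ_spec n hx hx.of_succ
      obtain ⟨B, hyB, hyE⟩ := wordEdge_succ_spec n hy hy.of_succ
      obtain rfl : A = a := sigma_snd_eq (hxA.symm.trans hx1.symm)
      obtain rfl : B = b := sigma_snd_eq (hyB.symm.trans hy1.symm)
      refine ⟨by rw [← hx1], by rw [← hy1], ?_, ?_⟩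
      · rw [hxE, hyE]
        exact fun hcon => hne (congrArg Sigma.fst hcon)
      · rw [hxE, hyE]
        exact step_sound_adj hR (goodG_fullExp R n) hne hA hp ha hb

theorem base_complete {x y : ℕ → R.Alph} (hx : R.IsWalkUpTo x 0) (hy : R.IsWalkUpTo y 0)
    (hadj : (R.fullExp 0).Adjacent (R.wordEdge x 0 hx).1 (R.wordEdge y 0 hy).1) :
    ∃ t, GlTrans R (.q0 none) (x 0, y 0) t := by
  classical
  obtain ⟨ex, hx0⟩ : ∃ a : R.E none, x 0 = ⟨none, a⟩ := ⟨_, sigma_eq_mk' (x 0) hx.1⟩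
  obtain ⟨ey, hy0⟩ : ∃ a : R.E none, y 0 = ⟨none, a⟩ := ⟨_, sigma_eq_mk' (y 0) hy.1⟩
  have hex : (R.wordEdge x 0 hx).1 = ex := cast_snd hx.1 hx0
  have hey : (R.wordEdge y 0 hy).1 = ey := cast_snd hy.1 hy0
  rw [hex, hey] at hadj
  by_cases hxy : ex = ey
  · subst hxy
    have hw : ((⟨none, ex⟩ : R.Alph), (⟨none, ex⟩ : R.Alph)) = (x 0, y 0) := by
      rw [hx0, hy0]
      rfl
    exact ⟨_, hw ▸ GlTrans.type0 none ex⟩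
  · obtain ⟨v, h1, h2⟩ := hadj
    obtain ⟨α, β, hA⟩ := adjType_exists (v := v) h1 h2
    have hw : ((⟨none, ex⟩ : R.Alph), (⟨none, ey⟩ : R.Alph)) = (x 0, y 0) := by
      rw [hx0, hy0]
      rfl
    exact ⟨_, hw ▸ GlTrans.type1 none _ _ hxy hA⟩

theorem step_complete (hR : R.Expanding) {x y : ℕ → R.Alph} {n : ℕ}
    (hx : R.IsWalkUpTo x (n + 1)) (hy : R.IsWalkUpTo y (n + 1))
    {s : GlState R} (hs : Inv R x y n hx.of_succ hy.of_succ s)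
    (hadj : (R.fullExp (n + 1)).Adjacent (R.wordEdge x (n + 1) hx).1
      (R.wordEdge y (n + 1) hy).1) :
    ∃ t, GlTrans R s (x (n + 1), y (n + 1)) t := by
  classical
  cases s with
  | q0 z =>
      obtain ⟨hpre, hz⟩ := hs
      obtain ⟨A, hxA, hxE⟩ := wordEdge_succ_spec n hx hx.of_succ
      obtain ⟨B, hyB, hyE⟩ := wordEdge_succ_spec' n hy hy.of_succ
        (wordEdge_congr n (fun l hl => (hpre l hl).symm) hy.of_succ hx.of_succ)
      have hz2 : z = some ((R.fullExp n).col (R.wordEdge x n hx.of_succ).1) :=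
        hz.trans (congrArg some (R.wordEdge x n hx.of_succ).2.symm)
      subst hz2
      by_cases hAB : A = B
      · have hw : ((⟨some ((R.fullExp n).col (R.wordEdge x n hx.of_succ).1), B⟩ : R.Alph),
            (⟨some ((R.fullExp n).col (R.wordEdge x n hx.of_succ).1), B⟩ : R.Alph)) =
            (x (n + 1), y (n + 1)) := by
          rw [hxA, hyB, hAB]
          rfl
        exact ⟨_, hw ▸ GlTrans.type0 _ B⟩
      · rw [hxE, hyE] at hadj
        obtain ⟨v, h1, h2⟩ := hadj
        have hG := goodG_fullExp R n
        have hcom : ∃ v0, (R.ini _ A = v0 ∨ R.fin _ A = v0) ∧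
            (R.ini _ B = v0 ∨ R.fin _ B = v0) := by
          rcases h1 with h1 | h1 <;> rcases h2 with h2 | h2
          · exact ⟨_, Or.inl (attach_injective hG _ (h1.trans h2.symm)), Or.inl rfl⟩
          · exact ⟨_, Or.inl (attach_injective hG _ (h1.trans h2.symm)), Or.inr rfl⟩
          · exact ⟨_, Or.inr (attach_injective hG _ (h1.trans h2.symm)), Or.inl rfl⟩
          · exact ⟨_, Or.inr (attach_injective hG _ (h1.trans h2.symm)), Or.inr rfl⟩
        obtain ⟨v0, hv1, hv2⟩ := hcom
        obtain ⟨α, β, hA2⟩ := adjType_exists hv1 hv2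
        have hw : ((⟨some ((R.fullExp n).col (R.wordEdge x n hx.of_succ).1), A⟩ : R.Alph),
            (⟨some ((R.fullExp n).col (R.wordEdge x n hx.of_succ).1), B⟩ : R.Alph)) =
            (x (n + 1), y (n + 1)) := by
          rw [hxA, hyB]
          rfl
        exact ⟨_, hw ▸ GlTrans.type1 _ A B hAB hA2⟩
  | q1 i γ j δ =>
      obtain ⟨hi, hj, hne, hA⟩ := hs
      have hi2 : i = (R.fullExp n).col (R.wordEdge x n hx.of_succ).1 :=
        hi.trans (R.wordEdge x n hx.of_succ).2.symm
      have hj2 : j = (R.fullExp n).col (R.wordEdge y n hy.of_succ).1 :=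
        hj.trans (R.wordEdge y n hy.of_succ).2.symm
      subst hi2; subst hj2
      obtain ⟨A, hxA, hxE⟩ := wordEdge_succ_spec n hx hx.of_succ
      obtain ⟨B, hyB, hyE⟩ := wordEdge_succ_spec n hy hy.of_succ
      rw [hxE, hyE] at hadj
      obtain ⟨u, w, α, β, hp, ha, hb⟩ :=
        expand_adjacent_tracked (goodG_fullExp R n) hne hA hadj
      have hw : ((⟨some ((R.fullExp n).col (R.wordEdge x n hx.of_succ).1), A⟩ : R.Alph),
          (⟨some ((R.fullExp n).col (R.wordEdge y n hy.of_succ).1), B⟩ : R.Alph)) =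
          (x (n + 1), y (n + 1)) := by
        rw [hxA, hyB]
        rfl
      exact ⟨_, hw ▸ GlTrans.type2 _ _ γ δ A B hp ha hb⟩

theorem adjacent_step_down {x y : ℕ → R.Alph} {n : ℕ}
    (hx : R.IsWalkUpTo x (n + 1)) (hy : R.IsWalkUpTo y (n + 1))
    (h : (R.fullExp (n + 1)).Adjacent (R.wordEdge x (n + 1) hx).1
      (R.wordEdge y (n + 1) hy).1) :
    (R.fullExp n).Adjacent (R.wordEdge x n hx.of_succ).1 (R.wordEdge y n hy.of_succ).1 := by
  obtain ⟨A, -, hxE⟩ := wordEdge_succ_spec n hx hx.of_succ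
  obtain ⟨B, -, hyE⟩ := wordEdge_succ_spec n hy hy.of_succ
  rw [hxE, hyE] at h
  exact adjacent_down (goodG_fullExp R n) h

theorem glued_iff {x y : ℕ → R.Alph} (hx : R.IsWalk x) (hy : R.IsWalk y) :
    R.Glued x y hx hy ↔
      ∀ n, (R.fullExp n).Adjacent (R.wordEdge x n (hx.upTo n)).1
        (R.wordEdge y n (hy.upTo n)).1 := by
  constructor
  · rintro ⟨N, hN⟩ n
    have key : ∀ k,
        (R.fullExp k).Adjacent (R.wordEdge x k (hx.upTo k)).1 (R.wordEdge y k (hy.upTo k)).1 →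
        ∀ m, m ≤ k →
        (R.fullExp m).Adjacent (R.wordEdge x m (hx.upTo m)).1 (R.wordEdge y m (hy.upTo m)).1 := by
      intro k
      induction k with
      | zero =>
          intro h m hm
          obtain rfl := Nat.le_zero.mp hm
          exact h
      | succ k ih =>
          intro h m hm
          rcases (by omega : m = k + 1 ∨ m ≤ k) with rfl | hm'
          · exact h
          · exact ih (adjacent_step_down (hx.upTo (k + 1)) (hy.upTo (k + 1)) h) m hm'
    exact key (max N n) (hN (max N n) (le_max_left _ _)) n (le_max_right _ _)
  · intro h
    exact ⟨0, fun n _ => h n⟩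

end RunLemmas

instance : Fintype EType :=
  ⟨⟨↑[EType.inn, EType.out, EType.lp, EType.dbp, EType.dbm], by decide⟩,
    fun x => by cases x <;> decide⟩

instance (R : ERS) : Fintype (GlState R) :=
  Fintype.ofEquiv (Option R.Col ⊕ R.Col × EType × R.Col × EType)
    { toFun := fun s => match s with
        | .inl z => .q0 z
        | .inr (i, γ, j, δ) => .q1 i γ j δ
      invFun := fun s => match s with
        | .q0 z => .inl z
        | .q1 i γ j δ => .inr (i, γ, j, δ)
      left_inv := by rintro (z | ⟨i, γ, j, δ⟩) <;> rfl
      right_inv := by rintro (z | ⟨i, γ, j, δ⟩) <;> rfl }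

open Classical in
/-- The gluing automaton, as a deterministic automaton with a partial
transition function. -/
noncomputable def glAut (R : ERS) : PAutomaton (R.Alph × R.Alph) where
  Q := GlState R
  init := .q0 none
  trans := fun q a => if h : ∃ t, GlTrans R q a t then some h.choose else none

theorem glAut_accepts (R : ERS) (hR : R.Expanding) (w : ℕ → R.Alph × R.Alph) :
    (glAut R).Accepts w ↔ GlAccepts R w := by
  classical
  constructor
  · rintro ⟨q, hq0, hstep⟩
    refine ⟨q, hq0, fun l => ?_⟩
    have h := hstep l
    by_cases hex : ∃ t, GlTrans R (q l) (w l) t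
    · rw [show (glAut R).trans (q l) (w l) = some hex.choose from dif_pos hex] at h
      have := hex.choose_spec
      rwa [Option.some.inj h] at this
    · rw [show (glAut R).trans (q l) (w l) = none from dif_neg hex] at h
      exact absurd h (by simp)
  · rintro ⟨q, hq0, hstep⟩
    refine ⟨q, hq0, fun l => ?_⟩
    have hex : ∃ t, GlTrans R (q l) (w l) t := ⟨_, hstep l⟩
    have h1 : (glAut R).trans (q l) (w l) = some hex.choose := dif_pos hex
    rw [h1, glTrans_det hR hex.choose_spec (hstep l)]
    rfl

open Classical in
/-- The canonical run of the gluing automaton on a word. -/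
noncomputable def runF (R : ERS) (w : ℕ → R.Alph × R.Alph) : ℕ → GlState R
  | 0 => .q0 none
  | n + 1 => if h : ∃ t, GlTrans R (runF R w n) (w n) t then h.choose else .q0 none


/-- The gluing relation of any expanding edge replacement
system is rational: there is a finite state automaton over `Σ²` (with partial
transition function) recognizing `(x₀,y₀)(x₁,y₁)…` exactly when both
components lie in `Ω_R` and are glued. -/
theorem gluing_relation_rational (R : ERS) (hR : R.Expanding) :
    ∃ M : PAutomaton (R.Alph × R.Alph),
      ∀ w : ℕ → R.Alph × R.Alph,
        M.Accepts w ↔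
          ∃ (hx : R.IsWalk fun n => (w n).1) (hy : R.IsWalk fun n => (w n).2),
            R.Glued (fun n => (w n).1) (fun n => (w n).2) hx hy := by
  classical
  refine ⟨glAut R, fun w => ?_⟩
  rw [glAut_accepts R hR w]
  constructor
  · rintro ⟨q, hq0, hstep⟩
    have hs0 : GlTrans R (.q0 none) (w 0) (q 1) := by rw [← hq0]; exact hstep 0
    have hx : R.IsWalk fun n => (w n).1 :=
      ⟨(glTrans_none hs0).1, fun l => (glTrans_chain (hstep l) (hstep (l + 1))).1⟩
    have hy : R.IsWalk fun n => (w n).2 :=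
      ⟨(glTrans_none hs0).2, fun l => (glTrans_chain (hstep l) (hstep (l + 1))).2⟩
    refine ⟨hx, hy, ?_⟩
    rw [glued_iff hx hy]
    have hinv : ∀ n, Inv R (fun n => (w n).1) (fun n => (w n).2) n
        (hx.upTo n) (hy.upTo n) (q (n + 1)) := by
      intro n
      induction n with
      | zero => exact base_sound (hx.upTo 0) (hy.upTo 0) rfl rfl hs0
      | succ n ih =>
          exact step_sound hR (hx.upTo (n + 1)) (hy.upTo (n + 1)) ih rfl rfl (hstep (n + 1))
    exact fun n => inv_adjacent (hinv n)
  · rintro ⟨hx, hy, hglue⟩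
    have hall := (glued_iff hx hy).mp hglue
    have key : ∀ n, GlTrans R (runF R w n) (w n) (runF R w (n + 1)) ∧
        Inv R (fun n => (w n).1) (fun n => (w n).2) n (hx.upTo n) (hy.upTo n)
          (runF R w (n + 1)) := by
      intro n
      induction n with
      | zero =>
          have hex : ∃ t, GlTrans R (runF R w 0) (w 0) t :=
            base_complete (hx.upTo 0) (hy.upTo 0) (hall 0)
          have htrans : GlTrans R (runF R w 0) (w 0) (runF R w 1) := by
            rw [show runF R w 1 = hex.choose from dif_pos hex]
            exact hex.choose_spec
          exact ⟨htrans, base_sound (hx.upTo 0) (hy.upTo 0) rfl rfl htrans⟩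
      | succ n ih =>
          have hex : ∃ t, GlTrans R (runF R w (n + 1)) (w (n + 1)) t :=
            step_complete hR (hx.upTo (n + 1)) (hy.upTo (n + 1)) ih.2 (hall (n + 1))
          have htrans : GlTrans R (runF R w (n + 1)) (w (n + 1)) (runF R w (n + 2)) := by
            rw [show runF R w (n + 2) = hex.choose from dif_pos hex]
            exact hex.choose_spec
          exact ⟨htrans, step_sound hR (hx.upTo (n + 1)) (hy.upTo (n + 1)) ih.2 rfl rfl htrans⟩
    exact ⟨runF R w, rfl, fun l => (key l).1⟩

end ERSPaper
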